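/- For every constrained expression E and interpretation I, ε ∈ L_I(E) if and only if there exist a pair (X, φ) ∈ S^ε(E) and a Γ-realization r over I such that eval_{I,r}(φ) = 1. -/

import Mathlib

open Computability

/-- Words over the symbol alphabet `A` and the variable alphabet `V`. -/
abbrev Word (A V : Type) := List (A ⊕ V)

/-- Terms over an expression environment: variables, the empty word, letters,
catenation (the built-in binary function symbol `·`) and extra function symbols `F`. -/
inductive Tm (A V : Type) (F : ℕ → Type) : Type
  | var : V → Tm A V F
  | eps : Tm A V F
  | ltr : A → Tm A V F
  | cat : Tm A V F → Tm A V F → Tm A V F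
  | app : {k : ℕ} → F k → (Fin k → Tm A V F) → Tm A V F

/-- Quantifier-free boolean formulae: predicate symbols from `P` applied to terms,
combined by arbitrary `k`-ary boolean operators. -/
inductive Fm (A V : Type) (P F : ℕ → Type) : Type
  | atom : {k : ℕ} → P k → (Fin k → Tm A V F) → Fm A V P F
  | op : {k : ℕ} → ((Fin k → Bool) → Bool) → (Fin k → Fm A V P F) → Fm A V P F

/-- An expression interpretation: domain `Σ*` (i.e. `List A`), letters, `ε` and
catenation interpreted standardly; the remaining function and predicate symbols
are interpreted by arbitrary (total, functional) maps. -/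
structure Interp (A V : Type) (P F : ℕ → Type) where
  fn : {k : ℕ} → F k → (Fin k → List A) → List A
  pr : {k : ℕ} → P k → (Fin k → List A) → Bool

/-- Evaluation of a term under an interpretation and a realization `r : V → Σ*`. -/
def Tm.eval {A V : Type} {P F : ℕ → Type} (I : Interp A V P F) (r : V → List A) :
    Tm A V F → List A
  | .var x => r x
  | .eps => []
  | .ltr a => [a]
  | .cat t u => Tm.eval I r t ++ Tm.eval I r u
  | .app f ts => I.fn f fun i => Tm.eval I r (ts i)

/-- Evaluation of a boolean formula under an interpretation and a realization. -/
def Fm.eval {A V : Type} {P F : ℕ → Type} (I : Interp A V P F) (r : V → List A) :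
    Fm A V P F → Bool
  | .atom p ts => I.pr p fun i => Tm.eval I r (ts i)
  | .op o fs => o fun i => Fm.eval I r (fs i)

/-- Extension of a realization to a monoid morphism `(Σ ∪ Γ)* → Σ*`. -/
def rWord {A V : Type} (r : V → List A) (α : Word A V) : List A :=
  α.flatMap (Sum.elim (fun a => [a]) r)

/-- Constrained expressions over an expression environment `(A, V, P, F)`,
with sum as the only boolean operator over expressions. -/
inductive CExp (A V : Type) (P F : ℕ → Type) : Type
  | zero : CExp A V P F
  | word : Word A V → CExp A V P F
  | plus : CExp A V P F → CExp A V P F → CExp A V P F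
  | comp : CExp A V P F → CExp A V P F → CExp A V P F
  | star : CExp A V P F → CExp A V P F
  | constr : CExp A V P F → Fm A V P F → CExp A V P F
  | mtch : Word A V → CExp A V P F → CExp A V P F

/-- The `(I,r)`-language of a constrained expression. -/
def CExp.lang {A V : Type} {P F : ℕ → Type} (I : Interp A V P F) (r : V → List A) :
    CExp A V P F → Language A
  | .zero => 0
  | .word α => {rWord r α}
  | .plus E₁ E₂ => CExp.lang I r E₁ + CExp.lang I r E₂
  | .comp E₁ E₂ => CExp.lang I r E₁ * CExp.lang I r E₂
  | .star E₁ => (CExp.lang I r E₁)∗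
  | .constr E₁ φ => if Fm.eval I r φ then CExp.lang I r E₁ else 0
  | .mtch α E₁ => {w | w = rWord r α ∧ w ∈ CExp.lang I r E₁}

/-- The `I`-language of a constrained expression: union over all realizations. -/
def langI {A V : Type} {P F : ℕ → Type} (I : Interp A V P F) (E : CExp A V P F) :
    Language A :=
  {w | ∃ r : V → List A, w ∈ CExp.lang I r E}

/-- The set of variable symbols occurring in a word. -/
def varsW {A V : Type} (α : Word A V) : Set V := {x | Sum.inr x ∈ α}

/-- A word made only of variable symbols (i.e. a word of `Γ*`). -/
def onlyVars {A V : Type} (α : Word A V) : Prop := ∀ c ∈ α, ∃ x : V, c = Sum.inr x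

/-- The formula `⊤`. -/
def fmTrue {A V : Type} {P F : ℕ → Type} : Fm A V P F :=
  Fm.op (fun _ : Fin 0 → Bool => true) (fun i => i.elim0)

/-- Conjunction of two formulae. -/
def fmAnd {A V : Type} {P F : ℕ → Type} (φ ψ : Fm A V P F) : Fm A V P F :=
  Fm.op (fun v : Fin 2 → Bool => v 0 && v 1) ![φ, ψ]

/-- Substitution of `ε` for every variable of `X` in a term. -/
noncomputable def Tm.substEps {A V : Type} {F : ℕ → Type} (X : Set V) :
    Tm A V F → Tm A V F
  | .var x => open Classical in if x ∈ X then .eps else .var x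
  | .eps => .eps
  | .ltr a => .ltr a
  | .cat t u => .cat (Tm.substEps X t) (Tm.substEps X u)
  | .app f ts => .app f fun i => Tm.substEps X (ts i)

/-- Substitution of `ε` for every variable of `X` in a formula (`φ_{X←ε}`). -/
noncomputable def Fm.substEps {A V : Type} {P F : ℕ → Type} (X : Set V) :
    Fm A V P F → Fm A V P F
  | .atom p ts => .atom p fun i => Tm.substEps X (ts i)
  | .op o fs => .op o fun i => Fm.substEps X (fs i)

/-- The product `⊗` on indicator sets. -/
noncomputable def tensor {A V : Type} {P F : ℕ → Type}
    (S₁ S₂ : Set (Set V × Fm A V P F)) : Set (Set V × Fm A V P F) :=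
  {p | ∃ q₁ ∈ S₁, ∃ q₂ ∈ S₂,
      p = (q₁.1 ∪ q₂.1, Fm.substEps (q₁.1 ∪ q₂.1) (fmAnd q₁.2 q₂.2))}

/-- The indicator set `S^ε(E)`: pairs of a set of variables that must be erased and
a formula that must be satisfied for `ε` to belong to the language of `E`. -/
noncomputable def Seps {A V : Type} {P F : ℕ → Type} :
    CExp A V P F → Set (Set V × Fm A V P F)
  | .zero => ∅
  | .word α => {p | onlyVars α ∧ p = (varsW α, fmTrue)}
  | .mtch α E₁ => {p | onlyVars α ∧ p ∈ tensor {(varsW α, fmTrue)} (Seps E₁)}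
  | .plus E₁ E₂ => Seps E₁ ∪ Seps E₂
  | .comp E₁ E₂ => tensor (Seps E₁) (Seps E₂)
  | .star _ => {((∅ : Set V), fmTrue)}
  | .constr E₁ φ => {p | ∃ q ∈ Seps E₁, p = (q.1, Fm.substEps q.1 (fmAnd φ q.2))}

/-! For a fixed realization `r`, `ε ∈ L_{I,r}(E)` holds iff some `(X, φ) ∈ S^ε(E)` has `r`
vanishing on `X` and `φ` true under `r`. This goes by structural induction on `E`: `⊗` matches
catenation because `uv = ε` forces `u = v = ε`, and the substitution `X ← ε` does not change the
value of a formula under a realization that already vanishes on `X`. Taking the union over `r`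
gives one direction of the theorem. Conversely, every formula of `S^ε(E)` is `⊤` or of the form
`ψ_{X←ε}`, so it keeps its value when `r` is replaced by the realization that erases `X`. -/

noncomputable def eraseOn {A V : Type} (X : Set V) (r : V → List A) : V → List A :=
  open Classical in fun x => if x ∈ X then [] else r x

section Erase

variable {A V : Type} {X : Set V} {r : V → List A}

lemma eraseOn_eq_self (h : ∀ x ∈ X, r x = []) : eraseOn X r = r := by
  funext x
  by_cases hx : x ∈ X <;> simp [eraseOn, hx, h]

lemma eraseOn_vanishes (X : Set V) (r : V → List A) : ∀ x ∈ X, eraseOn X r x = [] :=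
  fun _ hx => if_pos hx

lemma eraseOn_eraseOn : eraseOn X (eraseOn X r) = eraseOn X r :=
  eraseOn_eq_self (eraseOn_vanishes X r)

end Erase

section Substitution

variable {A V : Type} {P F : ℕ → Type} (I : Interp A V P F) (r : V → List A) (X : Set V)

lemma Tm.eval_substEps (t : Tm A V F) :
    (t.substEps X).eval I r = t.eval I (eraseOn X r) := by
  induction t with
  | var x => by_cases hx : x ∈ X <;> simp [Tm.substEps, Tm.eval, eraseOn, hx]
  | eps | ltr => rfl
  | cat t u iht ihu => simp [Tm.substEps, Tm.eval, iht, ihu]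
  | app f ts ih => simp [Tm.substEps, Tm.eval, ih]

lemma Fm.eval_substEps (φ : Fm A V P F) :
    (φ.substEps X).eval I r = φ.eval I (eraseOn X r) := by
  induction φ with
  | atom p ts => simp [Fm.substEps, Fm.eval, Tm.eval_substEps]
  | op o fs ih => simp [Fm.substEps, Fm.eval, ih]

variable {r X}

lemma Fm.eval_substEps_of_vanishes (h : ∀ x ∈ X, r x = []) (φ : Fm A V P F) :
    (φ.substEps X).eval I r = φ.eval I r := by
  rw [Fm.eval_substEps, eraseOn_eq_self h]

lemma Fm.eval_eraseOn_substEps (φ : Fm A V P F) :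
    (φ.substEps X).eval I (eraseOn X r) = (φ.substEps X).eval I r := by
  rw [Fm.eval_substEps, Fm.eval_substEps, eraseOn_eraseOn]

lemma Fm.eval_fmAnd (φ ψ : Fm A V P F) :
    (fmAnd φ ψ).eval I r = (φ.eval I r && ψ.eval I r) := by
  simp [fmAnd, Fm.eval]

end Substitution

lemma eval_eraseOn_of_mem_Seps {A V : Type} {P F : ℕ → Type} (I : Interp A V P F)
    (r : V → List A) {E : CExp A V P F} {p : Set V × Fm A V P F} (hp : p ∈ Seps E) :
    p.2.eval I (eraseOn p.1 r) = p.2.eval I r := by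
  induction E generalizing p with
  | zero => exact absurd hp (Set.notMem_empty p)
  | word α => obtain ⟨-, rfl⟩ := hp; rfl
  | star => subst hp; rfl
  | plus E₁ E₂ ih₁ ih₂ => exact hp.elim ih₁ ih₂
  | comp E₁ E₂ =>
    obtain ⟨q₁, -, q₂, -, rfl⟩ := hp
    exact Fm.eval_eraseOn_substEps I _
  | constr E₁ φ =>
    obtain ⟨q, -, rfl⟩ := hp
    exact Fm.eval_eraseOn_substEps I _
  | mtch α E₁ =>
    obtain ⟨-, q₁, -, q₂, -, rfl⟩ := hp
    exact Fm.eval_eraseOn_substEps I _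

def IndicatorHolds {A V : Type} {P F : ℕ → Type} (I : Interp A V P F) (r : V → List A)
    (S : Set (Set V × Fm A V P F)) : Prop :=
  ∃ p ∈ S, (∀ x ∈ p.1, r x = []) ∧ p.2.eval I r = true

section IndicatorHolds

variable {A V : Type} {P F : ℕ → Type} (I : Interp A V P F) (r : V → List A)
  (S₁ S₂ : Set (Set V × Fm A V P F))

lemma indicatorHolds_union :
    IndicatorHolds I r (S₁ ∪ S₂) ↔ IndicatorHolds I r S₁ ∨ IndicatorHolds I r S₂ := by
  simp only [IndicatorHolds, Set.mem_union, or_and_right, exists_or]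

lemma indicatorHolds_sep (c : Prop) :
    IndicatorHolds I r {p | c ∧ p ∈ S₁} ↔ c ∧ IndicatorHolds I r S₁ := by
  simp only [IndicatorHolds, Set.mem_ofPred_eq, and_assoc, exists_and_left]

lemma indicatorHolds_singleton_fmTrue (X : Set V) :
    IndicatorHolds I r {(X, fmTrue)} ↔ ∀ x ∈ X, r x = [] := by
  simp [IndicatorHolds, fmTrue, Fm.eval]

lemma indicatorHolds_constrain (φ : Fm A V P F) :
    IndicatorHolds I r {p | ∃ q ∈ S₁, p = (q.1, (fmAnd φ q.2).substEps q.1)} ↔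
      φ.eval I r = true ∧ IndicatorHolds I r S₁ := by
  constructor
  · rintro ⟨_, ⟨q, hq, rfl⟩, hvan, heval⟩
    rw [Fm.eval_substEps_of_vanishes I hvan, Fm.eval_fmAnd, Bool.and_eq_true] at heval
    exact ⟨heval.1, q, hq, hvan, heval.2⟩
  · rintro ⟨hφ, q, hq, hvan, heval⟩
    refine ⟨_, ⟨q, hq, rfl⟩, hvan, ?_⟩
    rw [Fm.eval_substEps_of_vanishes I hvan, Fm.eval_fmAnd, hφ, heval, Bool.and_self]

lemma indicatorHolds_tensor :
    IndicatorHolds I r (tensor S₁ S₂) ↔ IndicatorHolds I r S₁ ∧ IndicatorHolds I r S₂ := by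
  constructor
  · rintro ⟨_, ⟨q₁, hq₁, q₂, hq₂, rfl⟩, hvan, heval⟩
    rw [Fm.eval_substEps_of_vanishes I hvan, Fm.eval_fmAnd, Bool.and_eq_true] at heval
    exact ⟨⟨q₁, hq₁, fun x hx => hvan x (.inl hx), heval.1⟩,
      ⟨q₂, hq₂, fun x hx => hvan x (.inr hx), heval.2⟩⟩
  · rintro ⟨⟨q₁, hq₁, hvan₁, heval₁⟩, ⟨q₂, hq₂, hvan₂, heval₂⟩⟩
    have hvan : ∀ x ∈ q₁.1 ∪ q₂.1, r x = [] := fun x hx => hx.elim (hvan₁ x) (hvan₂ x)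
    refine ⟨_, ⟨q₁, hq₁, q₂, hq₂, rfl⟩, hvan, ?_⟩
    rw [Fm.eval_substEps_of_vanishes I hvan, Fm.eval_fmAnd, heval₁, heval₂, Bool.and_self]

end IndicatorHolds

lemma Language.nil_mem_mul_iff {α : Type*} {l m : Language α} :
    [] ∈ l * m ↔ [] ∈ l ∧ [] ∈ m := by
  simp only [Language.mem_mul, List.append_eq_nil_iff]
  constructor
  · rintro ⟨_, hl, _, hm, rfl, rfl⟩
    exact ⟨hl, hm⟩
  · rintro ⟨hl, hm⟩
    exact ⟨_, hl, _, hm, rfl, rfl⟩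

lemma rWord_eq_nil_iff {A V : Type} (r : V → List A) (α : Word A V) :
    rWord r α = [] ↔ onlyVars α ∧ ∀ x ∈ varsW α, r x = [] := by
  simp only [rWord, List.flatMap_eq_nil_iff, onlyVars, varsW, Set.mem_ofPred_eq]
  constructor
  · intro h
    refine ⟨fun c hc => ?_, fun x hx => by simpa using h _ hx⟩
    rcases c with a | x
    · simpa using h _ hc
    · exact ⟨x, rfl⟩
  · rintro ⟨honly, hvar⟩ c hc
    obtain ⟨x, rfl⟩ := honly c hc
    simpa using hvar x hc

lemma nil_mem_lang_iff {A V : Type} {P F : ℕ → Type} (I : Interp A V P F) (r : V → List A)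
    (E : CExp A V P F) : [] ∈ E.lang I r ↔ IndicatorHolds I r (Seps E) := by
  induction E with
  | zero => simp [CExp.lang, Seps, IndicatorHolds]
  | word α =>
    refine (eq_comm.trans (rWord_eq_nil_iff r α)).trans ?_
    rw [← indicatorHolds_singleton_fmTrue I r (varsW α)]
    exact (indicatorHolds_sep I r _ _).symm
  | plus E₁ E₂ ih₁ ih₂ =>
    rw [Seps, indicatorHolds_union, ← ih₁, ← ih₂]
    rfl
  | comp E₁ E₂ ih₁ ih₂ =>
    rw [Seps, indicatorHolds_tensor, ← ih₁, ← ih₂]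
    exact Language.nil_mem_mul_iff
  | star E₁ =>
    simpa [CExp.lang, Seps, indicatorHolds_singleton_fmTrue] using Language.nil_mem_kstar _
  | constr E₁ φ ih =>
    rw [Seps, indicatorHolds_constrain, ← ih, CExp.lang]
    cases φ.eval I r <;> simp
  | mtch α E₁ ih =>
    rw [Seps, indicatorHolds_sep, indicatorHolds_tensor, indicatorHolds_singleton_fmTrue, ← ih,
      ← and_assoc, ← rWord_eq_nil_iff, eq_comm]
    rfl

/-- `ε ∈ L_I(E)` iff there exist a pair `(X, φ) ∈ S^ε(E)` and a realization `r`
such that `eval_{I,r}(φ) = 1`. -/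
theorem nullI_iff_Seps_sat {A V : Type} {P F : ℕ → Type}
    (I : Interp A V P F) (E : CExp A V P F) :
    (([] : List A) ∈ langI I E) ↔
      ∃ p ∈ Seps E, ∃ r : V → List A, Fm.eval I r p.2 = true := by
  constructor
  · rintro ⟨r, hr⟩
    obtain ⟨p, hp, -, heval⟩ := (nil_mem_lang_iff I r E).1 hr
    exact ⟨p, hp, r, heval⟩
  · rintro ⟨p, hp, r, heval⟩
    refine ⟨eraseOn p.1 r, (nil_mem_lang_iff I _ E).2 ⟨p, hp, eraseOn_vanishes p.1 r, ?_⟩⟩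
    rwa [eval_eraseOn_of_mem_Seps I r hp]
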